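/- Let Σ be a 3-chromatic signed simple graph (χ(Σ) = 3). Then M(Σ) = 1 if and only if there exists a vertex cover of the positive edge set E⁺ that is stable in Σ. -/

import Mathlib

/-- A signed simple graph: two edge-disjoint simple graphs on the same vertex set,
the positive edges and the negative edges. -/
structure SignedGraph (V : Type*) where
  pos : SimpleGraph V
  neg : SimpleGraph V
  disjoint : ∀ a b : V, ¬ (pos.Adj a b ∧ neg.Adj a b)

/-- The color set of size `n`: `{±1, …, ±k}` if `n = 2k`, and `{0, ±1, …, ±k}` if `n = 2k+1`. -/
noncomputable def signedColorSet (n : ℕ) : Finset ℤ :=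
  if Even n then (Finset.Icc (-((n / 2 : ℕ) : ℤ)) ((n / 2 : ℕ) : ℤ)).erase 0
  else Finset.Icc (-((n / 2 : ℕ) : ℤ)) ((n / 2 : ℕ) : ℤ)

/-- A proper coloration of a signed graph using the color set of size `n`. -/
def IsProperColoration {V : Type*} (S : SignedGraph V) (n : ℕ) (κ : V → ℤ) : Prop :=
  (∀ v, κ v ∈ signedColorSet n) ∧
  (∀ a b, S.pos.Adj a b → κ a ≠ κ b) ∧
  (∀ a b, S.neg.Adj a b → κ a ≠ -κ b)

/-- The chromatic number: the least size of a color set admitting a proper coloration. -/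
noncomputable def sChromaticNumber {V : Type*} (S : SignedGraph V) : ℕ :=
  sInf {n : ℕ | ∃ κ : V → ℤ, IsProperColoration S n κ}

/-- A minimal coloration: a proper coloration using the color set of size `χ(Σ)`. -/
def IsMinimalColoration {V : Type*} (S : SignedGraph V) (κ : V → ℤ) : Prop :=
  IsProperColoration S (sChromaticNumber S) κ

/-- The deficiency of a coloration: the number of unused colors from the color set of size `n`. -/
noncomputable def sDeficiency {V : Type*} [Fintype V] (n : ℕ) (κ : V → ℤ) : ℕ :=
  (signedColorSet n \ Finset.image κ Finset.univ).card

/-- Maximum deficiency over minimal colorations. -/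
noncomputable def maxDef {V : Type*} [Fintype V] (S : SignedGraph V) : ℕ :=
  sSup {d : ℕ | ∃ κ : V → ℤ, IsMinimalColoration S κ ∧ sDeficiency (sChromaticNumber S) κ = d}

/-- Minimum deficiency over minimal colorations. -/
noncomputable def minDef {V : Type*} [Fintype V] (S : SignedGraph V) : ℕ :=
  sInf {d : ℕ | ∃ κ : V → ℤ, IsMinimalColoration S κ ∧ sDeficiency (sChromaticNumber S) κ = d}

/-- A stable cover of the positive edges: a vertex cover of `E⁺` that is stable in `Σ`. -/
def IsStableCover {V : Type*} (S : SignedGraph V) (T : Set V) : Prop :=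
  (∀ a b, S.pos.Adj a b → a ∈ T ∨ b ∈ T) ∧
  (∀ a ∈ T, ∀ b ∈ T, ¬ S.pos.Adj a b ∧ ¬ S.neg.Adj a b)

/-- An edge `ab` has exactly one endpoint in `A`. -/
def crossing {V : Type*} (A : Set V) (a b : V) : Prop := ¬ ((a ∈ A) ↔ (b ∈ A))

/-- Switching a signed graph at a vertex set `A`: the sign of every edge with exactly one
endpoint in `A` is negated. -/
def SignedGraph.switch {V : Type*} (S : SignedGraph V) (A : Set V) : SignedGraph V where
  pos :=
    { Adj := fun a b => (S.pos.Adj a b ∧ ¬ crossing A a b) ∨ (S.neg.Adj a b ∧ crossing A a b)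
      symm := by
        constructor
        intro a b h
        unfold crossing at *
        rcases h with ⟨h1, h2⟩ | ⟨h1, h2⟩
        · exact Or.inl ⟨S.pos.adj_symm h1, by tauto⟩
        · exact Or.inr ⟨S.neg.adj_symm h1, by tauto⟩
      loopless := by
        constructor
        intro a h
        rcases h with ⟨h1, _⟩ | ⟨_, h2⟩
        · exact S.pos.ne_of_adj h1 rfl
        · exact h2 Iff.rfl }
  neg :=
    { Adj := fun a b => (S.neg.Adj a b ∧ ¬ crossing A a b) ∨ (S.pos.Adj a b ∧ crossing A a b)
      symm := by
        constructor
        intro a b h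
        unfold crossing at *
        rcases h with ⟨h1, h2⟩ | ⟨h1, h2⟩
        · exact Or.inl ⟨S.neg.adj_symm h1, by tauto⟩
        · exact Or.inr ⟨S.pos.adj_symm h1, by tauto⟩
      loopless := by
        constructor
        intro a h
        rcases h with ⟨h1, _⟩ | ⟨_, h2⟩
        · exact S.neg.ne_of_adj h1 rfl
        · exact h2 Iff.rfl }
  disjoint := by
    intro a b h
    have := S.disjoint a b
    tauto

/-- General proper coloration with an arbitrary color set `C ⊆ ℤ`. -/
def IsProperWith {V : Type*} (S : SignedGraph V) (C : Set ℤ) (κ : V → ℤ) : Prop :=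
  (∀ v, κ v ∈ C) ∧
  (∀ a b, S.pos.Adj a b → κ a ≠ κ b) ∧
  (∀ a b, S.neg.Adj a b → κ a ≠ -κ b)

open Classical in
/-- The coloration switching equivalent to `κ` via `A`: negate the colors on `A`. -/
noncomputable def switchColor {V : Type*} (A : Set V) (κ : V → ℤ) : V → ℤ :=
  fun v => if v ∈ A then -κ v else κ v

/-- The adjacency of the forcing graph `F(Σ)` for the matching `m`:
a directed edge from `x` to `y` whenever `x ȳ` is a negative edge. -/
def ForcingAdj {V : Type*} (S : SignedGraph V) (m : V → V) (x y : V) : Prop :=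
  S.neg.Adj x (m y)

/-! A minimal coloration of a 3-chromatic signed graph must use the color `0` (otherwise it
would be a coloration with `{±1}`) and one of `±1` (otherwise it would be a coloration with
`{0}`), so its deficiency is at most `1`, with equality exactly when it misses `1` or `-1`.
Such a coloration takes only the values `0` and `t = ∓1`, so every positive edge has an endpoint
colored `0`, and the zero class is stable because `0 = -0`. Conversely, coloring a stable cover
`0` and every other vertex `1` is proper and misses `-1`. -/

lemma Nat.sSup_eq_one_iff_of_forall_le_one {s : Set ℕ} (hs : ∀ d ∈ s, d ≤ 1) :
    sSup s = 1 ↔ 1 ∈ s := by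
  refine ⟨fun hsup => ?_, fun h1 => IsGreatest.csSup_eq ⟨h1, hs⟩⟩
  obtain rfl | hne := s.eq_empty_or_nonempty
  · simp at hsup
  · exact hsup ▸ Nat.sSup_mem hne ⟨1, hs⟩

lemma mem_signedColorSet_one {x : ℤ} : x ∈ signedColorSet 1 ↔ x = 0 := by
  rw [signedColorSet, if_neg (by decide)]
  norm_num [Finset.mem_Icc]

lemma mem_signedColorSet_two {x : ℤ} : x ∈ signedColorSet 2 ↔ x = -1 ∨ x = 1 := by
  norm_num [signedColorSet, Finset.mem_Icc, Finset.mem_erase]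
  omega

lemma mem_signedColorSet_three {x : ℤ} :
    x ∈ signedColorSet 3 ↔ x = -1 ∨ x = 0 ∨ x = 1 := by
  rw [signedColorSet, if_neg (by decide)]
  norm_num [Finset.mem_Icc]
  omega

lemma one_le_sDeficiency_iff {V : Type*} [Fintype V] {n : ℕ} {κ : V → ℤ} :
    1 ≤ sDeficiency n κ ↔ ∃ x ∈ signedColorSet n, ∀ v, κ v ≠ x := by
  simp [sDeficiency, Nat.one_le_iff_ne_zero, Finset.eq_empty_iff_forall_notMem]

namespace IsProperColoration

variable {V : Type*} {S : SignedGraph V} {n : ℕ} {κ : V → ℤ}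

lemma sChromaticNumber_le (hκ : IsProperColoration S n κ) : sChromaticNumber S ≤ n :=
  Nat.sInf_le ⟨κ, hκ⟩

lemma of_forall_mem (hκ : IsProperColoration S n κ) {m : ℕ}
    (hmem : ∀ v, κ v ∈ signedColorSet m) : IsProperColoration S m κ :=
  ⟨hmem, hκ.2⟩

lemma exists_eq_zero (h : sChromaticNumber S = 3) (hκ : IsProperColoration S 3 κ) :
    ∃ v, κ v = 0 := by
  by_contra! hne
  have h2 : IsProperColoration S 2 κ := hκ.of_forall_mem fun v => by
    have := mem_signedColorSet_three.1 (hκ.1 v)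
    exact mem_signedColorSet_two.2 (by have := hne v; omega)
  have := h2.sChromaticNumber_le
  omega

lemma exists_ne_zero (h : sChromaticNumber S = 3) (hκ : IsProperColoration S 3 κ) :
    ∃ v, κ v ≠ 0 := by
  by_contra! hzero
  have h1 : IsProperColoration S 1 κ :=
    hκ.of_forall_mem fun v => mem_signedColorSet_one.2 (hzero v)
  have := h1.sChromaticNumber_le
  omega

lemma sDeficiency_le_one [Fintype V] (h : sChromaticNumber S = 3)
    (hκ : IsProperColoration S 3 κ) : sDeficiency 3 κ ≤ 1 := by
  obtain ⟨u, hu⟩ := hκ.exists_eq_zero h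
  obtain ⟨w, hw⟩ := hκ.exists_ne_zero h
  have hw3 := mem_signedColorSet_three.1 (hκ.1 w)
  refine Finset.card_le_one.2 fun a ha b hb => ?_
  simp only [Finset.mem_sdiff, Finset.mem_image, Finset.mem_univ, true_and, not_exists] at ha hb
  have ha3 := mem_signedColorSet_three.1 ha.1
  have hb3 := mem_signedColorSet_three.1 hb.1
  have := ha.2 u; have := hb.2 u; have := ha.2 w; have := hb.2 w
  omega

lemma isStableCover_zero_class (hκ : IsProperColoration S 3 κ) {x : ℤ}
    (hx : x ∈ signedColorSet 3) (hx0 : x ≠ 0) (hmiss : ∀ v, κ v ≠ x) :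
    IsStableCover S {v | κ v = 0} := by
  refine ⟨fun a b hab => ?_, fun a ha b hb => ⟨fun hab => ?_, fun hab => ?_⟩⟩
  · have := hκ.2.1 a b hab
    have := mem_signedColorSet_three.1 (hκ.1 a)
    have := mem_signedColorSet_three.1 (hκ.1 b)
    have := mem_signedColorSet_three.1 hx
    have := hmiss a; have := hmiss b
    simp only [Set.mem_ofPred_eq]
    omega
  · exact hκ.2.1 a b hab (ha.trans hb.symm)
  · exact hκ.2.2 a b hab (by rw [ha, hb, neg_zero])

end IsProperColoration

lemma IsStableCover.isProperColoration_indicator_compl {V : Type*} {S : SignedGraph V}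
    {C : Set V} (hC : IsStableCover S C) : IsProperColoration S 3 (Cᶜ.indicator 1) := by
  classical
  refine ⟨fun v => ?_, fun a b hab => ?_, fun a b hab => ?_⟩
  · by_cases hv : v ∈ C <;> simp [Set.indicator, hv, mem_signedColorSet_three]
  · have hnot : ¬ (a ∈ C ∧ b ∈ C) := fun ⟨ha, hb⟩ => (hC.2 a ha b hb).1 hab
    rcases hC.1 a b hab with ha | hb
    · simp [Set.indicator, ha, show b ∉ C from fun hb => hnot ⟨ha, hb⟩]
    · simp [Set.indicator, hb, show a ∉ C from fun ha => hnot ⟨ha, hb⟩]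
  · by_cases ha : a ∈ C <;> by_cases hb : b ∈ C
    · exact absurd hab (hC.2 a ha b hb).2
    all_goals simp [Set.indicator, ha, hb]

/-- For a 3-chromatic signed simple graph, `M(Σ) = 1` iff there is a
vertex cover of the positive edges that is stable in `Σ`. -/
theorem maxdef_one_iff_stable_cover {V : Type*} [Fintype V] (S : SignedGraph V)
    (h : sChromaticNumber S = 3) :
    maxDef S = 1 ↔
      ∃ C : Set V,
        (∀ a b, S.pos.Adj a b → a ∈ C ∨ b ∈ C) ∧
        (∀ a ∈ C, ∀ b ∈ C, ¬ S.pos.Adj a b ∧ ¬ S.neg.Adj a b) := by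
  change _ ↔ ∃ C, IsStableCover S C
  simp only [maxDef, IsMinimalColoration, h]
  rw [Nat.sSup_eq_one_iff_of_forall_le_one
    (by rintro d ⟨κ, hκ, rfl⟩; exact hκ.sDeficiency_le_one h)]
  constructor
  · rintro ⟨κ, hκ, hdef⟩
    obtain ⟨x, hx, hmiss⟩ := one_le_sDeficiency_iff.1 hdef.ge
    obtain ⟨u, hu⟩ := hκ.exists_eq_zero h
    exact ⟨_, hκ.isStableCover_zero_class hx (fun hx0 => hmiss u (hu.trans hx0.symm)) hmiss⟩
  · rintro ⟨C, hC⟩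
    have hκ := hC.isProperColoration_indicator_compl
    have hmiss : ∀ v, Cᶜ.indicator 1 v ≠ (-1 : ℤ) := fun v => by
      by_cases hv : v ∈ C <;> simp [Set.indicator, hv]
    refine ⟨_, hκ, le_antisymm (hκ.sDeficiency_le_one h) ?_⟩
    exact one_le_sDeficiency_iff.2 ⟨-1, mem_signedColorSet_three.2 (Or.inl rfl), hmiss⟩
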